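/- arXiv:2405.16258 — 4 statements merged into one kernel-verified Lean document; each statement's English description precedes it below -/
import Mathlib

section
/- Let E be a real normed vector space, let σ > 0 and β ∈ [1,2], and define the generalized Gaussian kernel κ^β(a,b) = exp(−(‖a−b‖/σ)^β) for a, b ∈ E. Then for every fixed a ∈ E, the map b ↦ κ^β(a,b) is Lipschitz with constant β/σ; that is, for all b, c ∈ E, |κ^β(a,b) − κ^β(a,c)| ≤ (β/σ)·‖b − c‖. -/
lemma aux_gauss_lip (β : ℝ) (hβ1 : 1 ≤ β) {x y : ℝ} (hx : 0 ≤ x) (hy : 0 ≤ y) :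
    |Real.exp (-x ^ β) - Real.exp (-y ^ β)| ≤ β * |x - y| := by
  have hβ0 : 0 ≤ β := le_trans zero_le_one hβ1
  have key : ∀ z ∈ Set.Ici (0:ℝ),
      HasDerivWithinAt (fun t : ℝ => Real.exp (-t ^ β))
        (Real.exp (-z ^ β) * (-(β * z ^ (β - 1)))) (Set.Ici 0) z := by
    intro z _
    have h1 : HasDerivAt (fun t : ℝ => t ^ β) (β * z ^ (β - 1)) z :=
      Real.hasDerivAt_rpow_const (Or.inr hβ1)
    have := (h1.neg).exp
    exact this.hasDerivWithinAt
  have bound : ∀ z ∈ Set.Ici (0:ℝ),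
      ‖Real.exp (-z ^ β) * (-(β * z ^ (β - 1)))‖ ≤ β := by
    intro z hz
    simp only [Set.mem_Ici] at hz
    rw [norm_mul, norm_neg, norm_mul, Real.norm_eq_abs, Real.norm_eq_abs,
      Real.norm_eq_abs, abs_of_nonneg (Real.exp_pos _).le, abs_of_nonneg hβ0,
      abs_of_nonneg (Real.rpow_nonneg hz _)]
    have hkey : z ^ (β - 1) ≤ Real.exp (z ^ β) := by
      rcases le_or_gt z 1 with h | h
      · calc z ^ (β - 1) ≤ 1 := Real.rpow_le_one hz h (by linarith)
          _ ≤ Real.exp (z ^ β) := by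
              have := Real.exp_pos (z ^ β)
              have : (0:ℝ) ≤ z ^ β := Real.rpow_nonneg hz _
              linarith [Real.add_one_le_exp (z ^ β)]
      · calc z ^ (β - 1) ≤ z ^ β :=
              Real.rpow_le_rpow_of_exponent_le h.le (by linarith)
          _ ≤ Real.exp (z ^ β) := by linarith [Real.add_one_le_exp (z ^ β)]
    calc Real.exp (-z ^ β) * (β * z ^ (β - 1))
        = β * (z ^ (β - 1) * Real.exp (-z ^ β)) := by ring
      _ ≤ β * 1 := by
          apply mul_le_mul_of_nonneg_left _ hβ0
          rw [Real.exp_neg]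
          rw [← div_eq_mul_inv, div_le_one (Real.exp_pos _)]
          exact hkey
      _ = β := mul_one β
  have := (convex_Ici (0:ℝ)).norm_image_sub_le_of_norm_hasDerivWithin_le key bound hy hx
  simpa [Real.norm_eq_abs] using this

theorem generalized_gaussian_kernel_lipschitz {E : Type*} [NormedAddCommGroup E]
    [NormedSpace ℝ E] (σ β : ℝ) (hσ : 0 < σ) (hβ : β ∈ Set.Icc (1 : ℝ) 2)
    (a b c : E) :
    |Real.exp (-(‖a - b‖ / σ) ^ β) - Real.exp (-(‖a - c‖ / σ) ^ β)| ≤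
      (β / σ) * ‖b - c‖ := by
  obtain ⟨hβ1, hβ2⟩ := hβ
  have hx : (0:ℝ) ≤ ‖a - b‖ / σ := div_nonneg (norm_nonneg _) hσ.le
  have hy : (0:ℝ) ≤ ‖a - c‖ / σ := div_nonneg (norm_nonneg _) hσ.le
  have h := aux_gauss_lip β hβ1 hx hy
  have hnorm : |‖a - b‖ / σ - ‖a - c‖ / σ| ≤ ‖b - c‖ / σ := by
    rw [div_sub_div_same, abs_div, abs_of_pos hσ, div_le_div_iff_of_pos_right hσ]
    calc |‖a - b‖ - ‖a - c‖| ≤ ‖(a - b) - (a - c)‖ := abs_norm_sub_norm_le _ _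
      _ = ‖b - c‖ := by rw [show (a - b) - (a - c) = -(b - c) by abel, norm_neg]
  calc |Real.exp (-(‖a - b‖ / σ) ^ β) - Real.exp (-(‖a - c‖ / σ) ^ β)|
      ≤ β * |‖a - b‖ / σ - ‖a - c‖ / σ| := h
    _ ≤ β * (‖b - c‖ / σ) := by
        exact mul_le_mul_of_nonneg_left hnorm (by linarith)
    _ = (β / σ) * ‖b - c‖ := by ring
end

section
/- Let M > 0, α ∈ ℝ, S ∈ (1/2, 1) and S' ∈ (0, 1/2), and suppose e^α·S ≤ 1. Then PL_SoftCL(S,S',M,α) − PL_cl(S,S',M) > 0; that is, the soft contrastive positive-pair loss strictly exceeds the contrastive positive-pair loss. -/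
noncomputable def PL_SoftCL (S S' M α : ℝ) : ℝ :=
  -M * ((1 - S') * Real.log (1 - S') + S' * Real.log S') -
    ((1 - Real.exp α * S) * Real.log (1 - S) + Real.exp α * S * Real.log S)

noncomputable def PL_cl (S S' M : ℝ) : ℝ :=
  -M * Real.log (1 - S') - Real.log S

theorem softcl_gt_cl_positive_pair (M α S S' : ℝ) (hM : 0 < M)
    (hS : S ∈ Set.Ioo (1 / 2 : ℝ) 1) (hS' : S' ∈ Set.Ioo (0 : ℝ) (1 / 2))
    (hbound : Real.exp α * S ≤ 1) :
    0 < PL_SoftCL S S' M α - PL_cl S S' M := by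
  obtain ⟨hS1, hS2⟩ := hS
  obtain ⟨h1, h2⟩ := hS'
  have key : PL_SoftCL S S' M α - PL_cl S S' M =
      M * S' * (Real.log (1 - S') - Real.log S') +
        (1 - Real.exp α * S) * (Real.log S - Real.log (1 - S)) := by
    unfold PL_SoftCL PL_cl; ring
  rw [key]
  have hpos : 0 < M * S' * (Real.log (1 - S') - Real.log S') := by
    apply mul_pos (mul_pos hM h1)
    have := Real.log_lt_log h1 (by linarith : S' < 1 - S')
    linarith
  have hnn : 0 ≤ (1 - Real.exp α * S) * (Real.log S - Real.log (1 - S)) := by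
    apply mul_nonneg (by linarith)
    have := Real.log_le_log (by linarith : (0:ℝ) < 1 - S) (by linarith : 1 - S ≤ S)
    linarith
  linarith
end

section
/- Let M > 0, α ∈ ℝ, S ∈ (0, 1/2) and S' ∈ (1/2, 1), and suppose e^α·S ≤ 1. Then PL_SoftCL(S,S',M,α) − PL_cl(S,S',M) < 0; that is, in the noisy-pair regime (where pairs with homology label 1 have small latent similarity S and pairs with label 0 have large latent similarity S') the soft contrastive loss is strictly smaller than the contrastive loss. -/
theorem softcl_lt_cl_noisy_pair (M α S S' : ℝ) (hM : 0 < M)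
    (hS : S ∈ Set.Ioo (0 : ℝ) (1 / 2)) (hS' : S' ∈ Set.Ioo (1 / 2 : ℝ) 1)
    (hbound : Real.exp α * S ≤ 1) :
    PL_SoftCL S S' M α - PL_cl S S' M < 0 := by
  obtain ⟨hS0, hS2⟩ := hS
  obtain ⟨hS'2, hS'1⟩ := hS'
  have h1 : Real.log (1 - S') < Real.log S' :=
    Real.log_lt_log (by linarith) (by linarith)
  have h2 : Real.log S < Real.log (1 - S) :=
    Real.log_lt_log hS0 (by linarith)
  have key : PL_SoftCL S S' M α - PL_cl S S' M =
      M * S' * (Real.log (1 - S') - Real.log S') +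
      (1 - Real.exp α * S) * (Real.log S - Real.log (1 - S)) := by
    unfold PL_SoftCL PL_cl; ring
  rw [key]
  have hMS' : 0 < M * S' := by positivity
  nlinarith [mul_pos hMS' (sub_pos.mpr h1),
    mul_nonneg (sub_nonneg.mpr hbound) (sub_nonneg.mpr h2.le)]
end

section
/- Let M > 0 and α ≥ 0. Let S_p ∈ (1/2, 1) and S'_p ∈ (0, 1/2) be the latent similarities in the positive-pair case, and let S_n ∈ (0, 1/2) and S'_n ∈ (1/2, 1) be the latent similarities in the noisy-pair case, and suppose e^α·S_p ≤ 1. Define PL_cl = PL_cl(S_p,S'_p,M), PL_SoftCL = PL_SoftCL(S_p,S'_p,M,α), NL_cl = PL_cl(S_n,S'_n,M), and NL_SoftCL = PL_SoftCL(S_n,S'_n,M,α). Then all four quantities are strictly positive and the signal-to-noise ratios satisfy PL_cl / NL_cl < PL_SoftCL / NL_SoftCL. -/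
lemma softcl_diff_eq (M α S S' : ℝ) :
    PL_SoftCL S S' M α - PL_cl S S' M =
      M * S' * (Real.log (1 - S') - Real.log S') +
        (1 - Real.exp α * S) * (Real.log S - Real.log (1 - S)) := by
  unfold PL_SoftCL PL_cl; ring

theorem softcl_snr_gt_cl_snr (M α Sp S'p Sn S'n : ℝ) (hM : 0 < M) (hα : 0 ≤ α)
    (hSp : Sp ∈ Set.Ioo (1 / 2 : ℝ) 1) (hS'p : S'p ∈ Set.Ioo (0 : ℝ) (1 / 2))
    (hSn : Sn ∈ Set.Ioo (0 : ℝ) (1 / 2)) (hS'n : S'n ∈ Set.Ioo (1 / 2 : ℝ) 1)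
    (hbound : Real.exp α * Sp ≤ 1) :
    0 < PL_cl Sp S'p M ∧ 0 < PL_SoftCL Sp S'p M α ∧
      0 < PL_cl Sn S'n M ∧ 0 < PL_SoftCL Sn S'n M α ∧
      PL_cl Sp S'p M / PL_cl Sn S'n M <
        PL_SoftCL Sp S'p M α / PL_SoftCL Sn S'n M α := by
  obtain ⟨hSp1, hSp2⟩ := hSp
  obtain ⟨hS'p1, hS'p2⟩ := hS'p
  obtain ⟨hSn1, hSn2⟩ := hSn
  obtain ⟨hS'n1, hS'n2⟩ := hS'n
  have he : (0 : ℝ) < Real.exp α := Real.exp_pos α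
  -- positivity of PL_cl (positive case)
  have hPcl : 0 < PL_cl Sp S'p M := by
    unfold PL_cl
    have h1 : Real.log (1 - S'p) < 0 := Real.log_neg (by linarith) (by linarith)
    have h2 : Real.log Sp < 0 := Real.log_neg (by linarith) hSp2
    nlinarith
  -- positivity of PL_cl (noisy case)
  have hNcl : 0 < PL_cl Sn S'n M := by
    unfold PL_cl
    have h1 : Real.log (1 - S'n) < 0 := Real.log_neg (by linarith) (by linarith)
    have h2 : Real.log Sn < 0 := Real.log_neg hSn1 (by linarith)
    nlinarith
  -- positive case: SoftCL > cl
  have hdiffp : PL_cl Sp S'p M < PL_SoftCL Sp S'p M α := by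
    have key := softcl_diff_eq M α Sp S'p
    have h1 : Real.log S'p < Real.log (1 - S'p) := Real.log_lt_log hS'p1 (by linarith)
    have h2 : Real.log (1 - Sp) ≤ Real.log Sp :=
      Real.log_le_log (by linarith) (by linarith)
    have h3 : 0 ≤ 1 - Real.exp α * Sp := by linarith
    nlinarith [mul_pos (mul_pos hM hS'p1) (sub_pos.mpr h1),
      mul_nonneg h3 (sub_nonneg.mpr h2)]
  -- noisy case: SoftCL < cl
  have hen : Real.exp α * Sn < 1 := by nlinarith
  have hdiffn : PL_SoftCL Sn S'n M α < PL_cl Sn S'n M := by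
    have key := softcl_diff_eq M α Sn S'n
    have h1 : Real.log (1 - S'n) < Real.log S'n := Real.log_lt_log (by linarith) (by linarith)
    have h2 : Real.log Sn < Real.log (1 - Sn) := Real.log_lt_log hSn1 (by linarith)
    have h3 : 0 < 1 - Real.exp α * Sn := by linarith
    nlinarith [mul_pos (mul_pos hM (show (0:ℝ) < S'n by linarith)) (sub_pos.mpr h1),
      mul_pos h3 (sub_pos.mpr h2)]
  -- positivity of PL_SoftCL (noisy case)
  have hNsoft : 0 < PL_SoftCL Sn S'n M α := by
    unfold PL_SoftCL
    have l1 : Real.log (1 - S'n) < 0 := Real.log_neg (by linarith) (by linarith)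
    have l2 : Real.log S'n < 0 := Real.log_neg (by linarith) hS'n2
    have l3 : Real.log (1 - Sn) < 0 := Real.log_neg (by linarith) (by linarith)
    have l4 : Real.log Sn < 0 := Real.log_neg hSn1 (by linarith)
    have h3 : 0 < 1 - Real.exp α * Sn := by linarith
    have hesn : 0 < Real.exp α * Sn := by positivity
    nlinarith [mul_pos hM (mul_pos (show (0:ℝ) < 1 - S'n by linarith) (neg_pos.mpr l1)),
      mul_pos hM (mul_pos (show (0:ℝ) < S'n by linarith) (neg_pos.mpr l2)),
      mul_pos h3 (neg_pos.mpr l3), mul_pos hesn (neg_pos.mpr l4)]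
  have hPsoft : 0 < PL_SoftCL Sp S'p M α := lt_trans hPcl hdiffp
  refine ⟨hPcl, hPsoft, hNcl, hNsoft, ?_⟩
  rw [div_lt_div_iff₀ hNcl hNsoft]
  nlinarith
end
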